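/- arXiv:2005.09680 — 2 statements merged into one kernel-verified Lean document; each statement's English description precedes it below -/
import Mathlib

section
/- The group N_{pq²} has no normal subgroup of order q². -/
open Multiplicative

namespace Mizerka

/-- The standing hypotheses: `p` and `q` are odd primes with `q ∣ p - 1`, and `i` is a
natural number with `i ≡ 1 (mod q)` whose multiplicative order modulo `p` equals `q`. -/
structure Hyp (p q i : ℕ) : Prop where
  hp : Nat.Prime p
  hq : Nat.Prime q
  hoddp : Odd p
  hoddq : Odd q
  hdvd : q ∣ p - 1
  hmod : i ≡ 1 [MOD q]
  hord : orderOf (i : ZMod p) = q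

namespace Hyp

variable {p q i : ℕ}

theorem coprime_q (h : Hyp p q i) : Nat.Coprime i q := by
  have h1 : i % q = 1 % q := h.hmod
  unfold Nat.Coprime
  rw [Nat.gcd_comm, Nat.gcd_rec, h1, ← Nat.gcd_rec, Nat.gcd_one_right]

theorem coprime_p (h : Hyp p q i) : Nat.Coprime i p := by
  haveI : NeZero p := ⟨h.hp.ne_zero⟩
  have hq1 : q - 1 + 1 = q := Nat.succ_pred_eq_of_pos h.hq.pos
  have hmul : (i : ZMod p) * (i : ZMod p) ^ (q - 1) = 1 := by
    rw [← pow_succ', hq1, ← h.hord, pow_orderOf_eq_one]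
  exact (ZMod.isUnit_iff_coprime i p).mp (IsUnit.of_mul_eq_one _ hmul)

theorem coprime (h : Hyp p q i) : Nat.Coprime i (p * q) :=
  Nat.Coprime.mul_right h.coprime_p h.coprime_q

theorem pow_q_modeq (h : Hyp p q i) : i ^ q ≡ 1 [MOD p * q] := by
  have hpq : p ≠ q := by
    have h1 : 0 < p - 1 := by have := h.hp.two_le; omega
    have := Nat.le_of_dvd h1 h.hdvd
    omega
  have hc : Nat.Coprime p q := (Nat.coprime_primes h.hp h.hq).mpr hpq
  rw [← Nat.modEq_and_modEq_iff_modEq_mul hc]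
  constructor
  · haveI : NeZero p := ⟨h.hp.ne_zero⟩
    have hcast : ((i ^ q : ℕ) : ZMod p) = ((1 : ℕ) : ZMod p) := by
      push_cast
      rw [← h.hord, pow_orderOf_eq_one]
    exact (ZMod.natCast_eq_natCast_iff _ _ _).mp hcast
  · calc i ^ q ≡ 1 ^ q [MOD q] := h.hmod.pow q
      _ = 1 := one_pow q

/-- The unit of `ZMod (p*q)` determined by `i`. -/
def unit (h : Hyp p q i) : (ZMod (p * q))ˣ := ZMod.unitOfCoprime i h.coprime

/-- The unit of `ZMod p` determined by `i`. -/
def unitP (h : Hyp p q i) : (ZMod p)ˣ := ZMod.unitOfCoprime i h.coprime_p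

theorem unit_pow (h : Hyp p q i) : h.unit ^ q = 1 := by
  apply Units.ext
  have h2 : ((i ^ q : ℕ) : ZMod (p * q)) = ((1 : ℕ) : ZMod (p * q)) :=
    (ZMod.natCast_eq_natCast_iff _ _ _).mpr h.pow_q_modeq
  push_cast at h2
  simpa [Hyp.unit] using h2

theorem unitP_pow (h : Hyp p q i) : h.unitP ^ q = 1 := by
  apply Units.ext
  have h2 : (i : ZMod p) ^ q = 1 := by rw [← h.hord]; exact pow_orderOf_eq_one _
  simpa [Hyp.unitP] using h2

end Hyp

/-- Multiplication by a unit, as an automorphism of the (multiplicatively written)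
cyclic group `ZMod n`. -/
def zmodMulAut (n : ℕ) : (ZMod n)ˣ →* MulAut (Multiplicative (ZMod n)) where
  toFun u :=
    { toFun := fun x => ofAdd ((u : ZMod n) * x.toAdd)
      invFun := fun x => ofAdd (((u⁻¹ : (ZMod n)ˣ) : ZMod n) * x.toAdd)
      left_inv := fun x => by simp
      right_inv := fun x => by simp
      map_mul' := fun x y => by simp [mul_add, ← ofAdd_add] }
  map_one' := by ext x; simp
  map_mul' u v := by ext x; simp [mul_assoc]

/-- The function underlying the automorphism of the dihedral group induced by
multiplication by a unit on the rotation part. -/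
def dihedralAutFun (n : ℕ) (u : (ZMod n)ˣ) : DihedralGroup n → DihedralGroup n
  | .r j => .r ((u : ZMod n) * j)
  | .sr j => .sr ((u : ZMod n) * j)

/-- Multiplication of indices by a unit, as an automorphism of the dihedral group:
`a ↦ a^u`, `b ↦ b`. -/
def dihedralAut (n : ℕ) : (ZMod n)ˣ →* MulAut (DihedralGroup n) where
  toFun u :=
    { toFun := dihedralAutFun n u
      invFun := dihedralAutFun n u⁻¹
      left_inv := fun x => by cases x <;> simp [dihedralAutFun]
      right_inv := fun x => by cases x <;> simp [dihedralAutFun]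
      map_mul' := fun x y => by cases x <;> cases y <;> simp [dihedralAutFun, mul_add, mul_sub] }
  map_one' := by ext x; cases x <;> simp [dihedralAutFun]
  map_mul' u v := by ext x; cases x <;> simp [dihedralAutFun, mul_assoc]

/-- The homomorphism `ZMod q →* G` (written multiplicatively) sending `1` to a fixed
element `g` with `g ^ q = 1`. -/
def zmodPow {G : Type*} [Group G] (q : ℕ) [NeZero q] (g : G) (hg : g ^ q = 1) :
    Multiplicative (ZMod q) →* G where
  toFun x := g ^ (toAdd x).val
  map_one' := by
    show g ^ (toAdd (1 : Multiplicative (ZMod q))).val = 1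
    rw [toAdd_one, ZMod.val_zero, pow_zero]
  map_mul' x y := by
    have key : ∀ m : ℕ, g ^ (m % q) = g ^ m := fun m => by
      conv_rhs => rw [← Nat.div_add_mod m q]
      rw [pow_add, pow_mul, hg, one_pow, one_mul]
    show g ^ (toAdd (x * y)).val = g ^ (toAdd x).val * g ^ (toAdd y).val
    rw [toAdd_mul, ZMod.val_add, key, pow_add]

namespace Hyp

variable {p q i : ℕ}

/-- The action of `C_q` on `C_{pq}` sending the generator to multiplication by `i`. -/
def phiN (h : Hyp p q i) : Multiplicative (ZMod q) →* MulAut (Multiplicative (ZMod (p * q))) :=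
  haveI : NeZero q := ⟨h.hq.ne_zero⟩
  zmodPow q (zmodMulAut (p * q) h.unit) (by rw [← map_pow, h.unit_pow, map_one])

/-- The action of `C_q` on `D_{2pq}` sending the generator to `τ` (`τ(a) = a^i`, `τ(b) = b`). -/
def phiG (h : Hyp p q i) : Multiplicative (ZMod q) →* MulAut (DihedralGroup (p * q)) :=
  haveI : NeZero q := ⟨h.hq.ne_zero⟩
  zmodPow q (dihedralAut (p * q) h.unit) (by rw [← map_pow, h.unit_pow, map_one])

/-- The action of `C_q` on `C_p` sending the generator to multiplication by `i`. -/
def phiF (h : Hyp p q i) : Multiplicative (ZMod q) →* MulAut (Multiplicative (ZMod p)) :=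
  haveI : NeZero q := ⟨h.hq.ne_zero⟩
  zmodPow q (zmodMulAut p h.unitP) (by rw [← map_pow, h.unitP_pow, map_one])

end Hyp

/-- The group `N_{pq²} = ⟨a, c ∣ a^{pq} = c^q = 1, c a c⁻¹ = a^i⟩ = C_{pq} ⋊ C_q`. -/
abbrev Npq2 {p q i : ℕ} (h : Hyp p q i) : Type :=
  Multiplicative (ZMod (p * q)) ⋊[h.phiN] Multiplicative (ZMod q)

/-- The group `G_{p,q} = D_{2pq} ⋊_φ C_q`. -/
abbrev Gpq {p q i : ℕ} (h : Hyp p q i) : Type :=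
  DihedralGroup (p * q) ⋊[h.phiG] Multiplicative (ZMod q)

/-- The Frobenius group `F_{p,q} = C_p ⋊ C_q` (the nonabelian group of order `pq`). -/
abbrev Fpq {p q i : ℕ} (h : Hyp p q i) : Type :=
  Multiplicative (ZMod p) ⋊[h.phiF] Multiplicative (ZMod q)

variable {p q i : ℕ}

/-- The generator `a` of `N_{pq²}`. -/
def aN (h : Hyp p q i) : Npq2 h := SemidirectProduct.inl (ofAdd 1)

/-- The generator `c` of `N_{pq²}`. -/
def cN (h : Hyp p q i) : Npq2 h := SemidirectProduct.inr (ofAdd 1)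

/-- The generator `a` of `G_{p,q}`. -/
def aG (h : Hyp p q i) : Gpq h := SemidirectProduct.inl (DihedralGroup.r 1)

/-- The generator `b` of `G_{p,q}`. -/
def bG (h : Hyp p q i) : Gpq h := SemidirectProduct.inl (DihedralGroup.sr 0)

/-- The generator `c` of `G_{p,q}`. -/
def cG (h : Hyp p q i) : Gpq h := SemidirectProduct.inr (ofAdd 1)

/-- The real conjugacy class `(g)^± = (g) ∪ (g⁻¹)`. -/
def realClass {G : Type*} [Group G] (g : G) : Set G := {x | IsConj g x ∨ IsConj g⁻¹ x}

/-- `N` is a normal subgroup whose quotient is an `ℓ`-group (the quotient has `ℓ`-power order,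
i.e. `N` has `ℓ`-power index). -/
def OQuot {G : Type*} [Group G] (ℓ : ℕ) (N : Subgroup G) : Prop :=
  N.Normal ∧ ∃ k : ℕ, N.index = ℓ ^ k

/-- `H` is a large subgroup of `G`: it contains `O^ℓ(G)`, the smallest normal subgroup
with `ℓ`-group quotient, for some prime `ℓ`. -/
def IsLarge {G : Type*} [Group G] (H : Subgroup G) : Prop :=
  ∃ ℓ : ℕ, Nat.Prime ℓ ∧
    ∃ N : Subgroup G, OQuot ℓ N ∧ (∀ M : Subgroup G, OQuot ℓ M → N ≤ M) ∧ N ≤ H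

section Reps

variable {k : Type*} [CommSemiring k] {G : Type*} [Group G]

/-- The subspace `V^H` of `H`-fixed vectors of a representation. -/
def fixedPts {V : Type*} [AddCommMonoid V] [Module k V]
    (ρ : Representation k G V) (H : Subgroup G) : Submodule k V where
  carrier := {v | ∀ g ∈ H, ρ g v = v}
  add_mem' := by
    intro a b ha hb g hg
    rw [map_add, ha g hg, hb g hg]
  zero_mem' := by
    intro g hg
    rw [map_zero]
  smul_mem' := by
    intro c v hv g hg
    rw [map_smul, hv g hg]

end Reps

/-- The weak gap condition for a real representation: `dim V^P ≥ 2 dim V^H` for all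
`P < H ≤ G` with `P` of prime power order. -/
def WeakGap {G : Type*} [Group G] {V : Type*} [AddCommGroup V] [Module ℝ V]
    (ρ : Representation ℝ G V) : Prop :=
  ∀ P H : Subgroup G, P < H → (∃ ℓ k : ℕ, Nat.Prime ℓ ∧ Nat.card P = ℓ ^ k) →
    2 * Module.finrank ℝ (fixedPts ρ H) ≤ Module.finrank ℝ (fixedPts ρ P)

/-- Isomorphism of real representations: an equivariant linear equivalence. -/
def RepIso {G : Type*} [Group G] {U V : Type*} [AddCommGroup U] [Module ℝ U]
    [AddCommGroup V] [Module ℝ V]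
    (ρU : Representation ℝ G U) (ρV : Representation ℝ G V) : Prop :=
  ∃ e : U ≃ₗ[ℝ] V, ∀ (g : G) (u : U), e (ρU g u) = ρV g (e u)

/-- Two real representations are `𝒫`-matched if their restrictions to every subgroup of
prime power order are isomorphic. -/
def PMatched {G : Type*} [Group G] {U V : Type*} [AddCommGroup U] [Module ℝ U]
    [AddCommGroup V] [Module ℝ V]
    (ρU : Representation ℝ G U) (ρV : Representation ℝ G V) : Prop :=
  ∀ P : Subgroup G, (∃ ℓ k : ℕ, Nat.Prime ℓ ∧ Nat.card P = ℓ ^ k) →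
    RepIso (ρU.comp P.subtype) (ρV.comp P.subtype)

/-- A bundled finite-dimensional-free real representation of `G`. -/
structure RealRep (G : Type*) [Group G] where
  carrier : Type
  [acg : AddCommGroup carrier]
  [mod : Module ℝ carrier]
  rho : Representation ℝ G carrier

attribute [instance] RealRep.acg RealRep.mod

theorem dihedralAut_pow_r (n : ℕ) (u : (ZMod n)ˣ) (k : ℕ) (m : ZMod n) :
    ((dihedralAut n u) ^ k) (DihedralGroup.r m)
      = DihedralGroup.r (((u ^ k : (ZMod n)ˣ) : ZMod n) * m) := by
  induction k generalizing m with
  | zero => simp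
  | succ k ih =>
    rw [pow_succ, MulAut.mul_apply]
    have h1 : (dihedralAut n u) (DihedralGroup.r m) = DihedralGroup.r ((u : ZMod n) * m) := rfl
    rw [h1, ih, pow_succ, Units.val_mul, mul_assoc]

theorem Hyp.phiG_r (h : Hyp p q i) (z : Multiplicative (ZMod q)) (m : ZMod (p * q)) :
    h.phiG z (DihedralGroup.r m)
      = DihedralGroup.r (((h.unit ^ (toAdd z).val : (ZMod (p * q))ˣ) : ZMod (p * q)) * m) := by
  have h1 : h.phiG z = (dihedralAut (p * q) h.unit) ^ (toAdd z).val := rfl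
  rw [h1, dihedralAut_pow_r]

theorem r_inv (n : ℕ) (m : ZMod n) : (DihedralGroup.r m)⁻¹ = DihedralGroup.r (-m) := rfl

/-- The subgroup `N_{pq²} = {(aˡ, cᵐ)}` of `G_{p,q}`. -/
def NSub (h : Hyp p q i) : Subgroup (Gpq h) where
  carrier := {x | ∃ l : ZMod (p * q), x.left = DihedralGroup.r l}
  one_mem' := ⟨0, rfl⟩
  mul_mem' := by
    rintro x y ⟨lx, hx⟩ ⟨ly, hy⟩
    refine ⟨lx + (h.unit ^ (toAdd x.right).val : (ZMod (p * q))ˣ) * ly, ?_⟩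
    rw [SemidirectProduct.mul_left, hx, hy, h.phiG_r, DihedralGroup.r_mul_r]
  inv_mem' := by
    rintro x ⟨lx, hx⟩
    refine ⟨-((h.unit ^ (toAdd x.right⁻¹).val : (ZMod (p * q))ˣ) * lx), ?_⟩
    rw [SemidirectProduct.inv_left, hx, r_inv, h.phiG_r]
    congr 1
    ring

/-- The subgroup `N_{2pq} = {(bᵉaˡ, 1)} ≅ D_{2pq}` of `G_{p,q}`. -/
def N2pqSub (h : Hyp p q i) : Subgroup (Gpq h) :=
  MonoidHom.ker SemidirectProduct.rightHom

/-- The subgroup `N¹_{pq} = {(aˡ, 1)}` of `G_{p,q}`. -/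
def NpqOneSub (h : Hyp p q i) : Subgroup (Gpq h) where
  carrier := {x | x.right = 1 ∧ ∃ l : ZMod (p * q), x.left = DihedralGroup.r l}
  one_mem' := ⟨rfl, 0, rfl⟩
  mul_mem' := by
    rintro x y ⟨hx1, lx, hx⟩ ⟨hy1, ly, hy⟩
    refine ⟨by rw [SemidirectProduct.mul_right, hx1, hy1, mul_one],
      lx + (h.unit ^ (toAdd x.right).val : (ZMod (p * q))ˣ) * ly, ?_⟩
    rw [SemidirectProduct.mul_left, hx, hy, h.phiG_r, DihedralGroup.r_mul_r]
  inv_mem' := by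
    rintro x ⟨hx1, lx, hx⟩
    refine ⟨by rw [SemidirectProduct.inv_right, hx1, inv_one],
      -((h.unit ^ (toAdd x.right⁻¹).val : (ZMod (p * q))ˣ) * lx), ?_⟩
    rw [SemidirectProduct.inv_left, hx, r_inv, h.phiG_r]
    congr 1
    ring

/-- The subgroup `N²_{pq} = {(a^{qs}, cᵐ)}` of `G_{p,q}`. -/
def NpqTwoSub (h : Hyp p q i) : Subgroup (Gpq h) where
  carrier := {x | ∃ s : ZMod (p * q), x.left = DihedralGroup.r ((q : ZMod (p * q)) * s)}
  one_mem' := ⟨0, by simp [DihedralGroup.one_def, -DihedralGroup.r_zero]⟩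
  mul_mem' := by
    rintro x y ⟨sx, hx⟩ ⟨sy, hy⟩
    refine ⟨sx + (h.unit ^ (toAdd x.right).val : (ZMod (p * q))ˣ) * sy, ?_⟩
    rw [SemidirectProduct.mul_left, hx, hy, h.phiG_r, DihedralGroup.r_mul_r]
    congr 1
    ring
  inv_mem' := by
    rintro x ⟨sx, hx⟩
    refine ⟨-((h.unit ^ (toAdd x.right⁻¹).val : (ZMod (p * q))ˣ) * sx), ?_⟩
    rw [SemidirectProduct.inv_left, hx, r_inv, h.phiG_r]
    congr 1
    ring

/-- The subgroup `N_p = {(a^{qs}, 1)}` of `G_{p,q}`. -/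
def NpSub (h : Hyp p q i) : Subgroup (Gpq h) where
  carrier := {x | x.right = 1 ∧ ∃ s : ZMod (p * q), x.left = DihedralGroup.r ((q : ZMod (p * q)) * s)}
  one_mem' := ⟨rfl, 0, by simp [DihedralGroup.one_def, -DihedralGroup.r_zero]⟩
  mul_mem' := by
    rintro x y ⟨hx1, sx, hx⟩ ⟨hy1, sy, hy⟩
    refine ⟨by rw [SemidirectProduct.mul_right, hx1, hy1, mul_one],
      sx + (h.unit ^ (toAdd x.right).val : (ZMod (p * q))ˣ) * sy, ?_⟩
    rw [SemidirectProduct.mul_left, hx, hy, h.phiG_r, DihedralGroup.r_mul_r]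
    congr 1
    ring
  inv_mem' := by
    rintro x ⟨hx1, sx, hx⟩
    refine ⟨by rw [SemidirectProduct.inv_right, hx1, inv_one],
      -((h.unit ^ (toAdd x.right⁻¹).val : (ZMod (p * q))ˣ) * sx), ?_⟩
    rw [SemidirectProduct.inv_left, hx, r_inv, h.phiG_r]
    congr 1
    ring

/-- The subgroup `N_q = {(a^{ps}, 1)}` of `G_{p,q}`. -/
def NqSub (h : Hyp p q i) : Subgroup (Gpq h) where
  carrier := {x | x.right = 1 ∧ ∃ s : ZMod (p * q), x.left = DihedralGroup.r ((p : ZMod (p * q)) * s)}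
  one_mem' := ⟨rfl, 0, by simp [DihedralGroup.one_def, -DihedralGroup.r_zero]⟩
  mul_mem' := by
    rintro x y ⟨hx1, sx, hx⟩ ⟨hy1, sy, hy⟩
    refine ⟨by rw [SemidirectProduct.mul_right, hx1, hy1, mul_one],
      sx + (h.unit ^ (toAdd x.right).val : (ZMod (p * q))ˣ) * sy, ?_⟩
    rw [SemidirectProduct.mul_left, hx, hy, h.phiG_r, DihedralGroup.r_mul_r]
    congr 1
    ring
  inv_mem' := by
    rintro x ⟨hx1, sx, hx⟩
    refine ⟨by rw [SemidirectProduct.inv_right, hx1, inv_one],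
      -((h.unit ^ (toAdd x.right⁻¹).val : (ZMod (p * q))ˣ) * sx), ?_⟩
    rw [SemidirectProduct.inv_left, hx, r_inv, h.phiG_r]
    congr 1
    ring

end Mizerka

/-!
A subgroup of order `q²` of `N_{pq²}` has index `p`, prime to `q`; being normal, it then
contains every element of order `q`, in particular `c`, and with it the commutator
`⁅c, a⁆ = a^(i-1)`. Since `i ≢ 1 (mod p)`, no power `a^((i-1) n)` with `p ∤ n` is trivial,
whereas every element of the subgroup satisfies `x^(q²) = 1`.
-/

theorem Subgroup.mem_of_pow_eq_one_of_coprime_index {G : Type*} [Group G] {N : Subgroup G}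
    [N.Normal] {x : G} {n : ℕ} (hx : x ^ n = 1) (hn : n.Coprime N.index) : x ∈ N := by
  rw [← QuotientGroup.eq_one_iff, ← orderOf_eq_one_iff]
  refine Nat.eq_one_of_dvd_coprimes hn (orderOf_dvd_of_pow_eq_one ?_) ?_
  · rw [← QuotientGroup.mk_pow, hx, QuotientGroup.mk_one]
  · exact N.index_eq_card ▸ _root_.orderOf_dvd_natCard _

namespace Mizerka

open SemidirectProduct
open scoped commutatorElement

variable {p q i : ℕ}

namespace Hyp

theorem p_ne_q (h : Hyp p q i) : p ≠ q := by
  have hqp : q ≤ p - 1 := Nat.le_of_dvd (Nat.sub_pos_of_lt h.hp.one_lt) h.hdvd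
  have := h.hq.pos
  omega

theorem coprime_q_p (h : Hyp p q i) : q.Coprime p :=
  (Nat.coprime_primes h.hq h.hp).mpr h.p_ne_q.symm

theorem natCast_ne_one (h : Hyp p q i) : (i : ZMod p) ≠ 1 := by
  intro hi
  have hord := h.hord
  rw [hi, orderOf_one] at hord
  exact h.hq.one_lt.ne hord

theorem phiN_ofAdd_one_apply (h : Hyp p q i) (x : Multiplicative (ZMod (p * q))) :
    h.phiN (ofAdd 1) x = ofAdd ((i : ZMod (p * q)) * toAdd x) := by
  have : Fact (1 < q) := ⟨h.hq.one_lt⟩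
  show (zmodMulAut (p * q) h.unit ^ (1 : ZMod q).val) x = _
  rw [ZMod.val_one, pow_one]
  rfl

end Hyp

theorem natCard_Npq2 (h : Hyp p q i) : Nat.card (Npq2 h) = p * q * q := by
  rw [SemidirectProduct.card, Nat.card_congr toAdd, Nat.card_congr toAdd, Nat.card_zmod,
    Nat.card_zmod]

theorem cN_pow (h : Hyp p q i) : cN h ^ q = 1 := by
  rw [cN, ← map_pow, ← ofAdd_nsmul, nsmul_one, ZMod.natCast_self, ofAdd_zero, map_one]

theorem commutatorElement_cN_aN (h : Hyp p q i) :
    ⁅cN h, aN h⁆ = inl (ofAdd ((i : ZMod (p * q)) - 1)) := by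
  rw [commutatorElement_def, cN, aN, ← map_inv, ← inl_aut, h.phiN_ofAdd_one_apply, ← map_inv,
    ← map_mul, toAdd_ofAdd, mul_one, ← ofAdd_neg, ← ofAdd_add, sub_eq_add_neg]

theorem commutatorElement_cN_aN_pow_ne_one (h : Hyp p q i) {n : ℕ} (hn : n.Coprime p) :
    ⁅cN h, aN h⁆ ^ n ≠ 1 := by
  rw [commutatorElement_cN_aN, ← map_pow, ← ofAdd_nsmul, nsmul_eq_mul, ne_eq,
    map_eq_one_iff _ inl_injective, ofAdd_eq_one]
  intro hzero
  have : Fact p.Prime := ⟨h.hp⟩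
  have hmodp := congrArg (ZMod.castHom (dvd_mul_right p q) (ZMod p)) hzero
  rw [map_mul, map_sub, map_natCast, map_natCast, map_one, map_zero] at hmodp
  rcases mul_eq_zero.mp hmodp with hn0 | hi
  · rw [ZMod.natCast_eq_zero_iff] at hn0
    exact h.hp.one_lt.ne' (hn.symm.eq_one_of_dvd hn0)
  · exact h.natCast_ne_one (sub_eq_zero.mp hi)

end Mizerka

open Mizerka in
/-- The group `N_{pq²}` has no normal subgroup of order `q²`. -/
theorem statement_1 {p q i : ℕ} (h : Hyp p q i)
    (N : Subgroup (Npq2 h)) (hN : N.Normal) :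
    Nat.card N ≠ q ^ 2 := by
  intro hcard
  have hindex : N.index = p := by
    have := N.card_mul_index
    rw [hcard, natCard_Npq2] at this
    exact Nat.eq_of_mul_eq_mul_left (pow_pos h.hq.pos 2) (by linarith)
  have hc : cN h ∈ N :=
    Subgroup.mem_of_pow_eq_one_of_coprime_index (cN_pow h) (hindex.symm ▸ h.coprime_q_p)
  open scoped commutatorElement in
  have hca : ⁅cN h, aN h⁆ ∈ N :=
    Subgroup.commutator_le_left N ⊤ (Subgroup.commutator_mem_commutator hc (Subgroup.mem_top _))
  exact commutatorElement_cN_aN_pow_ne_one h (h.coprime_q_p.pow_left 2)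
    (hcard ▸ orderOf_dvd_iff_pow_eq_one.mp (N.orderOf_dvd_natCard hca))
end

section
/- Let V be an irreducible complex representation of N_{pq²} of dimension greater than 1 on which the central element a^p acts nontrivially. Then for every subgroup H ≤ N_{pq²} of order q², the subspace of H-fixed vectors of V is zero. -/
open Multiplicative

/-!
The element `a^p` has order `q`, and it is central because `c` acts on `⟨a⟩` by `a ↦ a^i` with
`i ≡ 1 (mod q)`. So `⟨a^p⟩` is a normal `q`-subgroup and lies in every Sylow `q`-subgroup; as
`|N_{pq²}| = pq²` with `q < p`, these are the subgroups of order `q²`. Hence every `H`-fixed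
vector is fixed by `a^p`. The `a^p`-fixed vectors form a subrepresentation, which is not all of
`V` since `ρ(a^p) ≠ 1`, so it is zero by irreducibility.
-/

theorem Representation.eq_zero_of_mem_center {k G V : Type*} [CommSemiring k] [Group G]
    [AddCommMonoid V] [Module k V] (ρ : Representation k G V)
    (hirr : ∀ W : Submodule k V, (∀ g : G, ∀ v ∈ W, ρ g v ∈ W) → W = ⊥ ∨ W = ⊤)
    {z : G} (hz : z ∈ Subgroup.center G) (hρz : ρ z ≠ 1) {v : V} (hv : ρ z v = v) :
    v = 0 := by
  let W : Submodule k V := LinearMap.eqLocus (ρ z) LinearMap.id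
  have hW : ∀ g : G, ∀ u ∈ W, ρ g u ∈ W := fun g u (hu : ρ z u = u) => by
    change ρ z (ρ g u) = ρ g u
    rw [← Module.End.mul_apply, ← map_mul, ← Subgroup.mem_center_iff.mp hz g, map_mul,
      Module.End.mul_apply, hu]
  rcases hirr W hW with hbot | htop
  · exact (Submodule.mem_bot k).mp (hbot ▸ hv)
  · exact absurd (LinearMap.ext fun u => (htop ▸ Submodule.mem_top : u ∈ W)) hρz

theorem Sylow.mem_of_mem_center {G : Type*} [Group G] {ℓ k : ℕ} {z : G}
    (hz : z ∈ Subgroup.center G) (hzk : orderOf z = ℓ ^ k) (P : Sylow ℓ G) : z ∈ P := by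
  have : (Subgroup.zpowers z).Normal := ⟨fun n hn g => by
    rw [Subgroup.mem_center_iff.mp (Subgroup.zpowers_le.mpr hz hn) g, mul_inv_cancel_right]
    exact hn⟩
  exact (IsPGroup.of_card (by rw [Nat.card_zpowers, hzk])).le_sylow_of_normal P
    (Subgroup.mem_zpowers z)

theorem SemidirectProduct.inl_mem_center {N G : Type*} [Group N] [Group G]
    {φ : G →* MulAut N} {n : N} (hn : n ∈ Subgroup.center N) (hφ : ∀ g, φ g n = n) :
    inl n ∈ Subgroup.center (N ⋊[φ] G) := by
  refine Subgroup.mem_center_iff.mpr fun g => SemidirectProduct.ext ?_ ?_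
  · simp [hφ, Subgroup.mem_center_iff.mp hn]
  · simp

namespace Mizerka

namespace Hyp

variable {p q i : ℕ}

theorem q_lt_p (h : Hyp p q i) : q < p := by
  have := Nat.le_of_dvd (by have := h.hp.two_le; omega) h.hdvd
  have := h.hq.pos
  omega

theorem unit_pow_mul_p (h : Hyp p q i) (k : ℕ) :
    ((h.unit ^ k : (ZMod (p * q))ˣ) : ZMod (p * q)) * p = p := by
  have hk : i ^ k * p ≡ 1 * p [MOD p * q] := by
    rw [mul_comm p q]
    exact Nat.ModEq.mul_right' p (by simpa using h.hmod.pow k)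
  simpa [Hyp.unit] using (ZMod.natCast_eq_natCast_iff _ _ _).mpr hk

theorem phiN_apply_ofAdd_p (h : Hyp p q i) (z : Multiplicative (ZMod q)) :
    h.phiN z (ofAdd (p : ZMod (p * q))) = ofAdd (p : ZMod (p * q)) := by
  have hz : h.phiN z = zmodMulAut (p * q) (h.unit ^ (toAdd z).val) := by
    rw [map_pow]
    rfl
  rw [hz]
  exact congrArg ofAdd (h.unit_pow_mul_p _)

theorem card_Npq2 (h : Hyp p q i) : Nat.card (Npq2 h) = p * q ^ 2 := by
  simp [SemidirectProduct.card, Nat.card_congr Multiplicative.toAdd, mul_assoc, sq]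

theorem factorization_card_Npq2 (h : Hyp p q i) : (Nat.card (Npq2 h)).factorization q = 2 := by
  rw [h.card_Npq2, Nat.factorization_mul h.hp.ne_zero (pow_ne_zero 2 h.hq.ne_zero),
    Finsupp.add_apply, h.hq.factorization_pow, Finsupp.single_eq_same,
    Nat.factorization_eq_zero_of_not_dvd fun hd => h.q_lt_p.ne ((Nat.prime_dvd_prime_iff_eq
      h.hq h.hp).mp hd), zero_add]

end Hyp

variable {p q i : ℕ}

theorem aN_pow_p (h : Hyp p q i) :
    aN h ^ p = SemidirectProduct.inl (ofAdd (p : ZMod (p * q))) := by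
  rw [aN, ← map_pow, ← ofAdd_nsmul, nsmul_one]

theorem aN_pow_p_mem_center (h : Hyp p q i) : aN h ^ p ∈ Subgroup.center (Npq2 h) := by
  rw [aN_pow_p]
  exact SemidirectProduct.inl_mem_center (Subgroup.mem_center_iff.mpr fun _ => mul_comm _ _)
    h.phiN_apply_ofAdd_p

theorem orderOf_aN (h : Hyp p q i) : orderOf (aN h) = p * q := by
  rw [aN, orderOf_injective _ SemidirectProduct.inl_injective, orderOf_ofAdd_eq_addOrderOf,
    ZMod.addOrderOf_one]

theorem orderOf_aN_pow_p (h : Hyp p q i) : orderOf (aN h ^ p) = q := by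
  rw [orderOf_pow_of_dvd h.hp.ne_zero (by rw [orderOf_aN]; exact dvd_mul_right p q), orderOf_aN,
    Nat.mul_div_cancel_left q h.hp.pos]

theorem aN_pow_p_mem_of_card_eq (h : Hyp p q i) {H : Subgroup (Npq2 h)} (hH : Nat.card H = q ^ 2) :
    aN h ^ p ∈ H := by
  have : Fact q.Prime := ⟨h.hq⟩
  have : Finite (Npq2 h) := Nat.finite_of_card_ne_zero (by
    rw [h.card_Npq2]; exact mul_ne_zero h.hp.ne_zero (pow_ne_zero 2 h.hq.ne_zero))
  let P : Sylow q (Npq2 h) := Sylow.ofCard H (by rw [hH, h.factorization_card_Npq2])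
  exact Sylow.mem_of_mem_center (aN_pow_p_mem_center h)
    ((orderOf_aN_pow_p h).trans (pow_one q).symm) P

end Mizerka

open Mizerka in
theorem statement_4_general {p q i : ℕ} (h : Hyp p q i) (V : Type) [AddCommGroup V] [Module ℂ V]
    (ρ : Representation ℂ (Npq2 h) V)
    (hirr : ∀ W : Submodule ℂ V, (∀ (g : Npq2 h), ∀ v ∈ W, ρ g v ∈ W) → W = ⊥ ∨ W = ⊤)
    (hcent : ρ ((aN h) ^ p) ≠ 1) :
    ∀ H : Subgroup (Npq2 h), Nat.card H = q ^ 2 →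
      ∀ v : V, (∀ g ∈ H, ρ g v = v) → v = 0 := by
  intro H hH v hv
  exact ρ.eq_zero_of_mem_center hirr (aN_pow_p_mem_center h) hcent
    (hv _ (aN_pow_p_mem_of_card_eq h hH))

open Mizerka in
/-- If `V` is an irreducible complex representation of `N_{pq²}` of dimension
greater than `1` on which the central element `a^p` acts nontrivially, then for every
subgroup `H ≤ N_{pq²}` of order `q²` the subspace of `H`-fixed vectors of `V` is zero. -/
theorem statement_4 {p q i : ℕ} (h : Hyp p q i) (V : Type) [AddCommGroup V] [Module ℂ V]
    [FiniteDimensional ℂ V] (ρ : Representation ℂ (Npq2 h) V)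
    (hirr : ∀ W : Submodule ℂ V, (∀ (g : Npq2 h), ∀ v ∈ W, ρ g v ∈ W) → W = ⊥ ∨ W = ⊤)
    (hdim : 1 < Module.finrank ℂ V)
    (hcent : ρ ((aN h) ^ p) ≠ 1) :
    ∀ H : Subgroup (Npq2 h), Nat.card H = q ^ 2 →
      ∀ v : V, (∀ g ∈ H, ρ g v = v) → v = 0 :=
  statement_4_general h V ρ hirr hcent
end
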